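/- arXiv:2408.07411 — 5 statements merged into one kernel-verified Lean document; each statement's English description precedes it below -/
import Mathlib

section
/- Let Γ be a finite Abelian group of odd order n, and let m > 1 divide n. Then there exist a complete mapping φ of Γ and a partition S_1, S_2, …, S_t of the elements of Γ such that |S_i| = m, ∑_{s∈S_i} s = 0 and ∑_{s∈S_i} φ(s) = 0 for every i with 1 ≤ i ≤ t. (In fact φ can be taken to be the identity map.) -/
/-- There exist a complete mapping `φ` of `Γ` and a partition of `Γ` into sets of size `m`,
each of which is zero-sum and whose image under `φ` is zero-sum. -/
def HasZeroSumCMPartition (Γ : Type*) [AddCommGroup Γ] [Fintype Γ] (m : ℕ) : Prop :=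
  ∃ (φ : Γ → Γ) (t : ℕ) (S : Fin t → Finset Γ),
    Function.Bijective φ ∧
    Function.Bijective (fun x : Γ => x + φ x) ∧
    (∀ g : Γ, ∃! i, g ∈ S i) ∧
    (∀ i, (S i).card = m) ∧
    (∀ i, ∑ s ∈ S i, s = 0) ∧
    (∀ i, ∑ s ∈ S i, φ s = 0)

section Helpers

variable {G : Type*} [AddCommGroup G] [Fintype G]

/-- In a group of odd order, `x + x = 0` forces `x = 0`. -/
lemma eq_zero_of_add_self_eq_zero (h : Odd (Fintype.card G)) {x : G}
    (hx : x + x = 0) : x = 0 := by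
  have h2 : addOrderOf x ∣ 2 := addOrderOf_dvd_iff_nsmul_eq_zero.2 (by simpa [two_nsmul] using hx)
  have hcard : addOrderOf x ∣ Fintype.card G := addOrderOf_dvd_card
  have hg : addOrderOf x ∣ Nat.gcd 2 (Fintype.card G) := Nat.dvd_gcd h2 hcard
  have hcop : Nat.gcd 2 (Fintype.card G) = 1 := Nat.coprime_two_left.mpr h
  rw [hcop, Nat.dvd_one, AddMonoid.addOrderOf_eq_one_iff] at hg
  exact hg

/-- In a group of odd order, scalar multiplication by `±1, ±2` is injective. -/
lemma zsmul_injective (h : Odd (Fintype.card G)) {c : ℤ}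
    (hc : c = 1 ∨ c = -1 ∨ c = 2 ∨ c = -2) :
    Function.Injective (fun x : G => c • x) := by
  intro x y hxy
  have hxy' : c • x = c • y := hxy
  have hz : c • (x - y) = 0 := by
    rw [smul_sub, hxy', sub_self]
  have : x - y = 0 := by
    rcases hc with rfl | rfl | rfl | rfl
    · simpa using hz
    · rw [neg_smul, one_smul, neg_eq_zero] at hz; exact hz
    · exact eq_zero_of_add_self_eq_zero h (by rw [← two_zsmul]; exact hz)
    · have : (2 : ℤ) • (x - y) = 0 := by
        have := congrArg Neg.neg hz
        simpa [neg_smul] using this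
      exact eq_zero_of_add_self_eq_zero h (by rw [← two_zsmul]; exact this)
  exact sub_eq_zero.mp this

/-- In a group of odd order, the sum of all elements is zero. -/
lemma sum_univ_eq_zero_of_odd_card (h : Odd (Fintype.card G)) :
    ∑ g : G, g = 0 := by
  have h1 : ∑ g : G, (Equiv.neg G g) = ∑ g : G, g := Equiv.sum_comp (Equiv.neg G) (fun g => g)
  have h2 : ∑ g : G, g = - ∑ g : G, g := by
    rw [← Finset.sum_neg_distrib]
    exact h1.symm
  have h3 : (∑ g : G, g) + (∑ g : G, g) = 0 := by
    nth_rewrite 2 [h2]; simp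
  exact eq_zero_of_add_self_eq_zero h h3

end Helpers

/-- A finite abelian group has a subgroup of every order dividing the group order. -/
lemma exists_addSubgroup_card_eq :
    ∀ (d : ℕ) (G : Type*) [AddCommGroup G] [Finite G], d ∣ Nat.card G →
      ∃ H : AddSubgroup G, Nat.card H = d := by
  intro d
  induction d using Nat.strong_induction_on with
  | _ d ih =>
    intro G _ _ hdvd
    rcases eq_or_ne d 1 with rfl | hd1
    · exact ⟨⊥, by simp⟩
    have hd0 : d ≠ 0 := by
      rintro rfl
      have : Nat.card G = 0 := zero_dvd_iff.mp hdvd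
      have hpos : 0 < Nat.card G := Nat.card_pos
      omega
    set p := d.minFac with hp_def
    have hp : p.Prime := Nat.minFac_prime hd1
    letI : Fintype G := Fintype.ofFinite G
    have hpcard : p ∣ Fintype.card G := by
      rw [← Nat.card_eq_fintype_card]; exact (d.minFac_dvd).trans hdvd
    haveI : Fact p.Prime := ⟨hp⟩
    obtain ⟨x, hx⟩ := exists_prime_addOrderOf_dvd_card p hpcard
    set H0 : AddSubgroup G := AddSubgroup.zmultiples x with hH0_def
    have hH0 : Nat.card H0 = p := by rw [Nat.card_zmultiples, hx]
    set Q := G ⧸ H0 with hQ_def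
    obtain ⟨d', hd'⟩ := d.minFac_dvd
    have hd'0 : d' ≠ 0 := by rintro rfl; omega
    have hd'lt : d' < d := by
      have : 2 ≤ p := hp.two_le
      nlinarith [Nat.pos_of_ne_zero hd'0]
    have hcardG : Nat.card G = Nat.card Q * Nat.card H0 :=
      AddSubgroup.card_eq_card_quotient_mul_card_addSubgroup H0
    have hd'Q : d' ∣ Nat.card Q := by
      obtain ⟨k, hk⟩ := hdvd
      refine ⟨k, ?_⟩
      have hcalc : Nat.card Q * p = (d' * k) * p := by
        calc Nat.card Q * p = Nat.card Q * Nat.card H0 := by rw [hH0]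
          _ = Nat.card G := hcardG.symm
          _ = d * k := hk
          _ = (d' * k) * p := by rw [hd']; ring
      exact Nat.eq_of_mul_eq_mul_right hp.pos hcalc
    obtain ⟨H', hH'⟩ := ih d' hd'lt Q hd'Q
    refine ⟨H'.comap (QuotientAddGroup.mk' H0), ?_⟩
    have hpre : Nat.card (H'.comap (QuotientAddGroup.mk' H0)) =
        Nat.card ((QuotientAddGroup.mk : G → Q) ⁻¹' (H' : Set Q)) :=
      Nat.card_congr (Equiv.subtypeEquivRight fun _ => Iff.rfl)
    rw [hpre, Nat.card_congr (QuotientAddGroup.preimageMkEquivAddSubgroupProdSet H0 _),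
      Nat.card_prod, hH0]
    have h1 : Nat.card (H' : Set Q) = d' := by rw [← hH']; rfl
    rw [h1, hd']

theorem stmt2 {Γ : Type*} [AddCommGroup Γ] [Fintype Γ]
    (hodd : Odd (Fintype.card Γ)) (m : ℕ) (hm : 1 < m) (hdvd : m ∣ Fintype.card Γ) :
    HasZeroSumCMPartition Γ m := by
  classical
  have hn0 : Fintype.card Γ ≠ 0 := hodd.pos.ne'
  have hoddvd : ∀ k : ℕ, k ∣ Fintype.card Γ → Odd k := by
    intro k hk
    rcases Nat.even_or_odd k with he | ho
    · obtain ⟨j, hj⟩ := hk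
      exact absurd (hj ▸ he.mul_right j) (Nat.not_even_iff_odd.mpr hodd)
    · exact ho
  have hmodd : Odd m := hoddvd m hdvd
  set t := Fintype.card Γ / m with htdef
  have htn : t ∣ Fintype.card Γ := Nat.div_dvd_of_dvd hdvd
  have hmt : m * t = Fintype.card Γ := Nat.mul_div_cancel' hdvd
  have ht0 : t ≠ 0 := by
    intro h
    rw [h, Nat.mul_zero] at hmt
    exact hn0 hmt.symm
  have htodd : Odd t := hoddvd t htn
  -- a subgroup of order t
  obtain ⟨K, hK⟩ := exists_addSubgroup_card_eq t Γ (by rw [Nat.card_eq_fintype_card]; exact htn)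
  letI : Fintype K := Fintype.ofFinite K
  have hKcard : Fintype.card K = t := by rw [← Nat.card_eq_fintype_card, hK]
  have hKodd : Odd (Fintype.card K) := hKcard ▸ htodd
  letI : Fintype (Γ ⧸ K) := Fintype.ofFinite _
  have hQcard : Fintype.card (Γ ⧸ K) = m := by
    have h1 : Nat.card Γ = Nat.card (Γ ⧸ K) * Nat.card K :=
      AddSubgroup.card_eq_card_quotient_mul_card_addSubgroup K
    rw [Nat.card_eq_fintype_card, Nat.card_eq_fintype_card, hK] at h1
    have h2 : m * t = Fintype.card (Γ ⧸ K) * t := by rw [hmt]; exact h1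
    exact (Nat.eq_of_mul_eq_mul_right (Nat.pos_of_ne_zero ht0) h2).symm
  have hQodd : Odd (Fintype.card (Γ ⧸ K)) := hQcard ▸ hmodd
  let e : Γ ⧸ K ≃ Fin m := (Fintype.equivFin (Γ ⧸ K)).trans (finCongr hQcard)
  let eK : Fin t ≃ K := (finCongr hKcard.symm).trans (Fintype.equivFin K).symm
  let i₁ : Fin m := ⟨1, hm⟩
  let c : ℕ → ℤ := fun i => if i = 0 then 1 else if i = 1 then -2 else (-1) ^ i
  have hc : ∀ i : ℕ, c i = 1 ∨ c i = -1 ∨ c i = 2 ∨ c i = -2 := by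
    intro i
    simp only [c]
    split_ifs
    · exact Or.inl rfl
    · exact Or.inr (Or.inr (Or.inr rfl))
    · rcases Nat.even_or_odd i with h | h
      · exact Or.inl h.neg_one_pow
      · exact Or.inr (Or.inl h.neg_one_pow)
  have hcsum : ∑ i : Fin m, c i.val = 0 := by
    rw [Fin.sum_univ_eq_sum_range (fun i => c i)]
    have hre : ∀ i ∈ Finset.range m, c i = (-1) ^ i + (if i = 1 then -1 else 0) := by
      intro i _
      rcases eq_or_ne i 0 with rfl | h0
      · norm_num [c]
      rcases eq_or_ne i 1 with rfl | h1
      · norm_num [c]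
      · simp [c, h0, h1]
    rw [Finset.sum_congr rfl hre, Finset.sum_add_distrib, neg_one_geom_sum,
      Finset.sum_ite_eq' (Finset.range m) 1 (fun _ => (-1 : ℤ))]
    have h1m : (1 : ℕ) ∈ Finset.range m := Finset.mem_range.mpr hm
    rw [if_pos h1m, if_neg (Nat.not_even_iff_odd.mpr hmodd)]
    ring
  let r : Γ ⧸ K → Γ := Quotient.out
  have hr : ∀ q : Γ ⧸ K, QuotientAddGroup.mk' K (r q) = q := fun q => Quotient.out_eq q
  set σ : Γ := ∑ q : Γ ⧸ K, r q with hσ_def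
  have hσK : σ ∈ K := by
    rw [← QuotientAddGroup.eq_zero_iff]
    have h1 : (QuotientAddGroup.mk' K) σ = ∑ q : Γ ⧸ K, (QuotientAddGroup.mk' K) (r q) :=
      map_sum _ _ _
    have h2 : ∑ q : Γ ⧸ K, (QuotientAddGroup.mk' K) (r q) = ∑ q : Γ ⧸ K, q :=
      Finset.sum_congr rfl fun q _ => hr q
    have h3 : ((σ : Γ) : Γ ⧸ K) = (QuotientAddGroup.mk' K) σ := rfl
    rw [h3, h1, h2]
    exact sum_univ_eq_zero_of_odd_card hQodd
  let f : Γ ⧸ K → K → Γ := fun q j =>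
    r q + (c (e q).val • (j : Γ) + if e q = i₁ then -σ else 0)
  have hfmk : ∀ (q : Γ ⧸ K) (j : K), QuotientAddGroup.mk' K (f q j) = q := by
    intro q j
    have hmem : c (e q).val • (j : Γ) + (if e q = i₁ then -σ else 0) ∈ K := by
      refine AddSubgroup.add_mem K (AddSubgroup.zsmul_mem K j.2 _) ?_
      split_ifs
      · exact AddSubgroup.neg_mem K hσK
      · exact AddSubgroup.zero_mem K
    have : (QuotientAddGroup.mk' K) (f q j) =
        (QuotientAddGroup.mk' K) (r q) + (QuotientAddGroup.mk' K)
          (c (e q).val • (j : Γ) + if e q = i₁ then -σ else 0) := map_add _ _ _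
    have hz : (QuotientAddGroup.mk' K) (c (e q).val • (j : Γ) + if e q = i₁ then -σ else 0) = 0 :=
      (QuotientAddGroup.eq_zero_iff _).mpr hmem
    rw [this, hz, add_zero, hr]
  have hinjq : ∀ j : K, Function.Injective (fun q : Γ ⧸ K => f q j) := by
    intro j q q' hqq'
    have h : f q j = f q' j := hqq'
    rw [← hfmk q j, ← hfmk q' j, h]
  have hinj : Function.Injective (fun p : (Γ ⧸ K) × K => f p.1 p.2) := by
    rintro ⟨q, j⟩ ⟨q', j'⟩ hqj
    have hqj' : f q j = f q' j' := hqj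
    have hq : q = q' := by rw [← hfmk q j, ← hfmk q' j', hqj']
    subst hq
    have hc' : c (e q).val • (j : Γ) = c (e q).val • (j' : Γ) := by
      have h := hqj'
      simp only [f] at h
      exact add_right_cancel (add_left_cancel h)
    have hcK : c (e q).val • j = c (e q).val • j' := by
      apply Subtype.coe_injective
      push_cast
      exact hc'
    have hj : j = j' := zsmul_injective hKodd (hc (e q).val) hcK
    rw [hj]
  have hbij : Function.Bijective (fun p : (Γ ⧸ K) × K => f p.1 p.2) := by
    rw [Fintype.bijective_iff_injective_and_card]
    exact ⟨hinj, by rw [Fintype.card_prod, hQcard, hKcard, hmt]⟩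
  set S : Fin t → Finset Γ := fun i => Finset.univ.image (fun q : Γ ⧸ K => f q (eK i)) with hS_def
  have hmemS : ∀ (g : Γ) (i : Fin t), g ∈ S i ↔ ∃ q, f q (eK i) = g := by
    intro g i
    simp only [hS_def, Finset.mem_image, Finset.mem_univ, true_and]
  have hsum0 : ∀ i : Fin t, ∑ s ∈ S i, s = 0 := by
    intro i
    rw [hS_def]
    rw [Finset.sum_image (fun q _ q' _ h => hinjq (eK i) h)]
    have hexp : ∑ q : Γ ⧸ K, f q (eK i) =
        (∑ q : Γ ⧸ K, r q) + ((∑ q : Γ ⧸ K, c (e q).val • ((eK i : K) : Γ)) +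
          ∑ q : Γ ⧸ K, if e q = i₁ then -σ else 0) := by
      rw [← Finset.sum_add_distrib, ← Finset.sum_add_distrib]
    rw [hexp]
    have hmid : ∑ q : Γ ⧸ K, c (e q).val • ((eK i : K) : Γ) = 0 := by
      rw [← Finset.sum_smul]
      have : ∑ q : Γ ⧸ K, c (e q).val = ∑ x : Fin m, c x.val :=
        Equiv.sum_comp e (fun x : Fin m => c x.val)
      rw [this, hcsum, zero_smul]
    have hlast : ∑ q : Γ ⧸ K, (if e q = i₁ then -σ else 0) = -σ := by
      have h1 : ∑ q : Γ ⧸ K, (if e q = i₁ then -σ else 0) =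
          ∑ x : Fin m, (if x = i₁ then -σ else 0) :=
        Equiv.sum_comp e (fun x : Fin m => if x = i₁ then -σ else 0)
      rw [h1, Finset.sum_ite_eq' Finset.univ i₁ (fun _ => -σ), if_pos (Finset.mem_univ _)]
    rw [hmid, hlast, ← hσ_def, zero_add, add_neg_cancel]
  refine ⟨id, t, S, Function.bijective_id, ?_, ?_, ?_, hsum0, fun i => by simpa using hsum0 i⟩
  · -- doubling is bijective
    have hinj2 : Function.Injective (fun x : Γ => x + id x) := by
      intro x y hxy
      simp only [id] at hxy
      have : (x - y) + (x - y) = 0 := by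
        rw [sub_add_sub_comm, hxy, sub_self]
      exact sub_eq_zero.mp (eq_zero_of_add_self_eq_zero hodd this)
    exact Finite.injective_iff_bijective.mp hinj2
  · -- unique membership
    intro g
    obtain ⟨⟨q0, j0⟩, hg⟩ := hbij.2 g
    refine ⟨eK.symm j0, ?_, ?_⟩
    · exact (hmemS _ _).mpr ⟨q0, by rw [eK.apply_symm_apply]; exact hg⟩
    · intro i hi
      obtain ⟨q', hq'⟩ := (hmemS _ _).mp hi
      have hpair : ((q', eK i) : (Γ ⧸ K) × K) = (q0, j0) := hinj (hq'.trans hg.symm)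
      have : eK i = j0 := (Prod.mk.injEq _ _ _ _).mp hpair |>.2
      rw [← this, eK.symm_apply_apply]
  · -- cardinality
    intro i
    rw [hS_def]
    rw [Finset.card_image_of_injective _ (hinjq (eK i)), Finset.card_univ, hQcard]
end

section
/- Let Γ be a finite Abelian group in the class 𝒢 of order n = a·b·c with a > 1. If there exists a Γ-Kotzig array set KAS_Γ(j, a; b·c), then there exists a Γ-Kotzig array set KAS_Γ(j, a·b; c). -/
/-- `Γ` belongs to the class `𝒢`: its order is odd or it has more than one involution. -/
def InClassG (Γ : Type*) [AddCommGroup Γ] [Fintype Γ] : Prop :=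
  Odd (Fintype.card Γ) ∨ 1 < Nat.card {g : Γ // g ≠ 0 ∧ g + g = 0}

/-- A `Γ`-Kotzig array set `KAS_Γ(j, m; t)`. -/
def IsKotzigArraySet (Γ : Type*) [AddCommGroup Γ] [Fintype Γ] (j m t : ℕ) : Prop :=
  ∃ x : Fin t × Fin j × Fin m → Γ,
    (∀ i : Fin j, Function.Bijective (fun p : Fin t × Fin m => x (p.1, i, p.2))) ∧
    (∀ (s : Fin t) (i : Fin j), ∑ l : Fin m, x (s, i, l) = 0) ∧
    (∀ (s : Fin t) (l : Fin m), ∑ i : Fin j, x (s, i, l) = 0)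

theorem stmt8 {Γ : Type*} [AddCommGroup Γ] [Fintype Γ] (hG : InClassG Γ)
    (a b c j : ℕ) (ha : 1 < a) (hcard : Fintype.card Γ = a * b * c)
    (h : IsKotzigArraySet Γ j a (b * c)) :
    IsKotzigArraySet Γ j (a * b) c := by
  obtain ⟨x, hbij, hrow, hcol⟩ := h
  let e : Fin c × Fin (a * b) ≃ Fin (b * c) × Fin a :=
    (Equiv.prodCongr (Equiv.refl _) finProdFinEquiv.symm).trans <|
    (Equiv.prodComm _ _).trans <|
    (Equiv.prodAssoc _ _ _).trans <|
    (Equiv.prodComm _ _).trans <|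
    (Equiv.prodCongr finProdFinEquiv (Equiv.refl _))
  refine ⟨fun p => x ((e (p.1, p.2.2)).1, p.2.1, (e (p.1, p.2.2)).2), ?_, ?_, ?_⟩
  · intro i
    have : (fun p : Fin c × Fin (a * b) => x ((e (p.1, p.2)).1, i, (e (p.1, p.2)).2))
        = (fun q : Fin (b * c) × Fin a => x (q.1, i, q.2)) ∘ e := by
      funext p; rfl
    rw [this]
    exact (hbij i).comp e.bijective
  · intro s i
    have := Equiv.sum_comp (finProdFinEquiv : Fin a × Fin b ≃ Fin (a * b))
      (fun l' => x ((e (s, l')).1, i, (e (s, l')).2))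
    rw [← this, Fintype.sum_prod_type_right]
    have key : ∀ (k : Fin b) (l : Fin a),
        e (s, finProdFinEquiv (l, k)) = (finProdFinEquiv (k, s), l) := by
      intro k l
      simp [e]
    calc ∑ k : Fin b, ∑ l : Fin a,
          x ((e (s, finProdFinEquiv (l, k))).1, i, (e (s, finProdFinEquiv (l, k))).2)
        = ∑ k : Fin b, ∑ l : Fin a, x (finProdFinEquiv (k, s), i, l) := by
          refine Finset.sum_congr rfl fun k _ => Finset.sum_congr rfl fun l _ => ?_
          rw [key]
      _ = 0 := by simp [hrow]
  · intro s l
    simpa using hcol (e (s, l)).1 (e (s, l)).2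
end

section
/- Let Γ be a finite Abelian group whose order is congruent to 1 modulo 3. Suppose the set Γ \ {0} admits a partition S_1, …, S_t into sets of size 3 such that ∑_{s∈S_i} s = 0 for every i. Then there exists a complete mapping φ of Γ that fixes the identity element (φ(0) = 0) and permutes the remaining elements as a product of disjoint 3-cycles, i.e., φ(φ(φ(x))) = x for all x ∈ Γ and φ(x) ≠ x for all x ≠ 0. -/
/-!
Send 0 to itself and rotate every block `S i = {a, b, c}` cyclically, `a ↦ b ↦ c ↦ a`.
This `φ` is fixed-point-free off 0 and satisfies `φ³ = id`, and since each block sums to zero,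
`x + φ x = -φ (φ x)`: so `x ↦ x + φ x` is the bijection `-(φ ∘ φ)`.
-/

open Finset

def IsCompleteMapping {Γ : Type*} [AddGroup Γ] (φ : Γ → Γ) : Prop :=
  Function.Bijective φ ∧ Function.Bijective fun x => x + φ x

theorem isCompleteMapping_of_add_eq_neg {Γ : Type*} [AddGroup Γ] {φ : Γ → Γ}
    (hcube : ∀ x, φ (φ (φ x)) = x) (hadd : ∀ x, x + φ x = -φ (φ x)) :
    IsCompleteMapping φ := by
  have hφ : Function.Bijective φ :=
    Function.bijective_iff_has_inverse.2 ⟨φ ∘ φ, hcube, hcube⟩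
  refine ⟨hφ, ?_⟩
  rw [show (fun x => x + φ x) = Neg.neg ∘ φ ∘ φ from funext hadd]
  exact neg_involutive.bijective.comp (hφ.comp hφ)

section BlockRotation

variable {α : Type*} [DecidableEq α] (B : α → Finset α)

/-- `B x` plays the role of the block containing `x`. -/
noncomputable def blockRotation (x : α) : α :=
  (B x).toList.formPerm x

variable {B}

theorem blockRotation_of_notMem {x : α} (hx : x ∉ B x) : blockRotation B x = x :=
  List.formPerm_apply_of_notMem (by simpa using hx)

theorem blockRotation_mem {x : α} (hx : x ∈ B x) : blockRotation B x ∈ B x := by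
  exact mem_toList.1 (List.formPerm_apply_mem_of_mem (mem_toList.2 hx))

theorem blockRotation_ne_self (hB3 : ∀ x, x ∈ B x → #(B x) = 3) {x : α} (hx : x ∈ B x) :
    blockRotation B x ≠ x := by
  refine (List.formPerm_apply_mem_ne_self_iff _ (nodup_toList _) x (mem_toList.2 hx)).2 ?_
  rw [length_toList, hB3 x hx]
  omega

variable (hB : ∀ x, ∀ y ∈ B x, B y = B x)
include hB

theorem block_blockRotation (x : α) : B (blockRotation B x) = B x := by
  by_cases hx : x ∈ B x
  · exact hB x _ (blockRotation_mem hx)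
  · rw [blockRotation_of_notMem hx]

theorem blockRotation_iterate (n : ℕ) (x : α) :
    (blockRotation B)^[n] x = ((B x).toList.formPerm ^ n) x := by
  induction n generalizing x with
  | zero => rfl
  | succ n ih =>
    rw [Function.iterate_succ_apply, ih, block_blockRotation hB, pow_succ, Equiv.Perm.mul_apply]
    rfl

theorem blockRotation_iterate_three (hB3 : ∀ x, x ∈ B x → #(B x) = 3) (x : α) :
    blockRotation B (blockRotation B (blockRotation B x)) = x := by
  by_cases hx : x ∈ B x
  · have hpow := List.formPerm_pow_length_eq_one_of_nodup (l := (B x).toList) (nodup_toList _)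
    rw [length_toList, hB3 x hx] at hpow
    simpa [hpow] using blockRotation_iterate hB 3 x
  · simp only [blockRotation_of_notMem hx]

theorem sum_block_eq_add_blockRotation [AddCommMonoid α] (hB3 : ∀ x, x ∈ B x → #(B x) = 3)
    {x : α} (hx : x ∈ B x) :
    ∑ s ∈ B x, s = x + blockRotation B x + blockRotation B (blockRotation B x) := by
  set y := blockRotation B x
  set z := blockRotation B y
  have hy : y ∈ B x := blockRotation_mem hx
  have hxy : x ≠ y := (blockRotation_ne_self hB3 hx).symm
  have hyz : y ≠ z := (blockRotation_ne_self hB3 (block_blockRotation hB x ▸ hy)).symm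
  have hxz : x ≠ z := fun h => by
    have hcube : blockRotation B z = x := blockRotation_iterate_three hB hB3 x
    rw [← h] at hcube
    exact hxy hcube.symm
  have hnot : x ∉ ({y, z} : Finset α) := by simp [hxy, hxz]
  have hz : z ∈ B x := block_blockRotation hB x ▸ blockRotation_mem (block_blockRotation hB x ▸ hy)
  have hblock : ({x, y, z} : Finset α) = B x := by
    refine eq_of_subset_of_card_le (by simp [insert_subset_iff, hx, hy, hz]) ?_
    rw [hB3 x hx, card_insert_of_notMem hnot, card_pair hyz]
  rw [← hblock, sum_insert hnot, sum_pair hyz, add_assoc]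

end BlockRotation

section PartitionBlock

variable {α ι : Type*} [Fintype ι] [DecidableEq α] (S : ι → Finset α)

/-- For a disjoint family, the part containing `x`, or `∅` if there is none. -/
def partBlock (x : α) : Finset α :=
  (univ.filter fun i => x ∈ S i).biUnion S

variable {S}

theorem partBlock_eq_empty {x : α} (hx : ∀ i, x ∉ S i) : partBlock S x = ∅ := by
  simp [partBlock, hx]

variable (hdisj : ∀ i j x, x ∈ S i → x ∈ S j → i = j)
include hdisj

theorem partBlock_eq {x : α} {i : ι} (hx : x ∈ S i) : partBlock S x = S i := by
  ext y
  simp only [partBlock, mem_biUnion, mem_filter, mem_univ, true_and]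
  exact ⟨fun ⟨j, hj, hy⟩ => hdisj j i x hj hx ▸ hy, fun hy => ⟨i, hx, hy⟩⟩

theorem partBlock_eq_of_mem (x : α) : ∀ y ∈ partBlock S x, partBlock S y = partBlock S x := by
  intro y hy
  obtain ⟨i, hi, hyi⟩ := mem_biUnion.1 hy
  rw [partBlock_eq hdisj hyi, partBlock_eq hdisj (mem_filter.1 hi).2]

end PartitionBlock

theorem stmt13_general {Γ : Type*} [AddCommGroup Γ] [Fintype Γ]
    (t : ℕ) (S : Fin t → Finset Γ)
    (hpart : ∀ g : Γ, g ≠ 0 → ∃! i, g ∈ S i)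
    (hzero : ∀ i, (0 : Γ) ∉ S i)
    (hsize : ∀ i, (S i).card = 3)
    (hsum : ∀ i, ∑ s ∈ S i, s = 0) :
    ∃ φ : Γ → Γ, Function.Bijective φ ∧
      Function.Bijective (fun x : Γ => x + φ x) ∧
      φ 0 = 0 ∧ (∀ x : Γ, φ (φ (φ x)) = x) ∧ (∀ x : Γ, x ≠ 0 → φ x ≠ x) := by
  classical
  have hdisj : ∀ i j x, x ∈ S i → x ∈ S j → i = j := fun i j x hi hj =>
    (hpart x fun h => hzero i (h ▸ hi)).unique hi hj
  have hmem : ∀ x : Γ, x ≠ 0 → x ∈ partBlock S x := fun x hx => by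
    obtain ⟨i, hi, -⟩ := hpart x hx
    rwa [partBlock_eq hdisj hi]
  have hB := partBlock_eq_of_mem hdisj
  have hB3 : ∀ x, x ∈ partBlock S x → #(partBlock S x) = 3 := fun x hx => by
    obtain ⟨i, hi, hxi⟩ := mem_biUnion.1 hx
    rw [partBlock_eq hdisj hxi, hsize]
  have hzero_rot : blockRotation (partBlock S) 0 = 0 :=
    blockRotation_of_notMem (by rw [partBlock_eq_empty hzero]; exact notMem_empty 0)
  have hcube := blockRotation_iterate_three hB hB3
  have hadd : ∀ x, x + blockRotation (partBlock S) x =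
      -blockRotation (partBlock S) (blockRotation (partBlock S) x) := fun x => by
    by_cases hx : x = 0
    · simp [hx, hzero_rot]
    · obtain ⟨i, hi, -⟩ := hpart x hx
      have h := sum_block_eq_add_blockRotation hB hB3 (hmem x hx)
      rw [partBlock_eq hdisj hi, hsum] at h
      exact eq_neg_of_add_eq_zero_left h.symm
  obtain ⟨hbij, hbij_add⟩ := isCompleteMapping_of_add_eq_neg hcube hadd
  exact ⟨_, hbij, hbij_add, hzero_rot, hcube, fun x hx => blockRotation_ne_self hB3 (hmem x hx)⟩

theorem stmt13 {Γ : Type*} [AddCommGroup Γ] [Fintype Γ]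
    (hcard : Fintype.card Γ % 3 = 1)
    (t : ℕ) (S : Fin t → Finset Γ)
    (hpart : ∀ g : Γ, g ≠ 0 → ∃! i, g ∈ S i)
    (hzero : ∀ i, (0 : Γ) ∉ S i)
    (hsize : ∀ i, (S i).card = 3)
    (hsum : ∀ i, ∑ s ∈ S i, s = 0) :
    ∃ φ : Γ → Γ, Function.Bijective φ ∧
      Function.Bijective (fun x : Γ => x + φ x) ∧
      φ 0 = 0 ∧ (∀ x : Γ, φ (φ (φ x)) = x) ∧ (∀ x : Γ, x ≠ 0 → φ x ≠ x) :=
  stmt13_general t S hpart hzero hsize hsum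
end

section
/- A finite Abelian group Γ admits a complete mapping if and only if Γ belongs to the class 𝒢, i.e., if and only if |Γ| is odd or Γ contains more than one involution. -/
/-! Auxiliary theory of complete mappings. -/

def HasCM (G : Type*) [AddCommGroup G] : Prop :=
  ∃ φ : G → G, Function.Bijective φ ∧ Function.Bijective (fun x : G => x + φ x)

lemma hasCM_of_addEquiv {G H : Type*} [AddCommGroup G] [AddCommGroup H] (e : G ≃+ H)
    (h : HasCM H) : HasCM G := by
  obtain ⟨φ, hφ, hσ⟩ := h
  refine ⟨fun x => e.symm (φ (e x)), e.symm.bijective.comp (hφ.comp e.bijective), ?_⟩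
  have heq : (fun x : G => x + e.symm (φ (e x)))
      = fun x => e.symm ((fun y => y + φ y) (e x)) := by
    funext x; simp [map_add]
  rw [heq]
  exact e.symm.bijective.comp (hσ.comp e.bijective)

lemma HasCM.prod {A B : Type*} [AddCommGroup A] [AddCommGroup B] (hA : HasCM A) (hB : HasCM B) :
    HasCM (A × B) := by
  obtain ⟨φ, hφ, hσ⟩ := hA; obtain ⟨ψ, hψ, hτ⟩ := hB
  refine ⟨Prod.map φ ψ, hφ.prodMap hψ, ?_⟩
  have heq : (fun p : A × B => p + Prod.map φ ψ p)
      = Prod.map (fun x => x + φ x) (fun y => y + ψ y) := rfl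
  rw [heq]; exact hσ.prodMap hτ

lemma hasCM_of_odd {G : Type*} [AddCommGroup G] [Fintype G] (h : Odd (Fintype.card G)) :
    HasCM G := by
  refine ⟨id, Function.bijective_id, ?_⟩
  rw [← Finite.injective_iff_bijective]
  intro x y hxy
  simp only [id] at hxy
  have h2 : (2 : ℕ) • (x - y) = 0 := by
    have hs : (x - y) + (x - y) = (x + x) - (y + y) := by abel
    rw [two_nsmul, hs, hxy, sub_self]
  have hd : addOrderOf (x - y) ∣ 2 := addOrderOf_dvd_of_nsmul_eq_zero h2
  have hc : addOrderOf (x - y) ∣ Fintype.card G := addOrderOf_dvd_card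
  rcases (Nat.dvd_prime Nat.prime_two).mp hd with h1 | h2'
  · have := AddMonoid.addOrderOf_eq_one_iff.mp h1
    exact sub_eq_zero.mp this
  · exfalso
    rw [h2'] at hc
    obtain ⟨c, hcc⟩ := hc
    obtain ⟨d, hdd⟩ := h
    omega

/-! ZMod helpers -/

def Tm (m : ℕ) (ε : ZMod 2) : ZMod m := (ε.val : ZMod m)

def halfm (m : ℕ) : ZMod m := ((m / 2 : ℕ) : ZMod m)

def cm (m : ℕ) (x : ZMod m) : ZMod 2 := if x.val < m / 2 then 0 else 1

lemma zmod_double {m : ℕ} [NeZero m] {z : ZMod m} (hz : z + z = 0) :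
    2 * z.val = 0 ∨ 2 * z.val = m := by
  have hv := ZMod.val_add z z
  rw [hz, ZMod.val_zero] at hv
  have hlt := ZMod.val_lt z
  have hdvd : m ∣ z.val + z.val := Nat.dvd_of_mod_eq_zero hv.symm
  obtain ⟨c, hc⟩ := hdvd
  have hm0 : m ≠ 0 := NeZero.ne m
  have hc2 : c < 2 := by
    by_contra hcge
    push_neg at hcge
    have : 2 * m ≤ m * c := by
      calc 2 * m = m * 2 := by ring
      _ ≤ m * c := Nat.mul_le_mul_left m hcge
    omega
  interval_cases c <;> omega

lemma zmod_invol_odd {m : ℕ} [NeZero m] (hm : ¬ 2 ∣ m) {z : ZMod m} (hz : z + z = 0) :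
    z = 0 := by
  rcases zmod_double hz with h | h
  · have : z.val = 0 := by omega
    rw [← ZMod.natCast_rightInverse z, this, Nat.cast_zero]
  · omega

lemma zmod_invol_even {m : ℕ} [NeZero m] {z : ZMod m} (hz : z + z = 0) (h0 : z ≠ 0) :
    2 ∣ m ∧ z = halfm m := by
  rcases zmod_double hz with h | h
  · exfalso
    apply h0
    have : z.val = 0 := by omega
    rw [← ZMod.natCast_rightInverse z, this, Nat.cast_zero]
  · constructor
    · exact ⟨z.val, h.symm⟩
    · have : z.val = m / 2 := by omega
      rw [← ZMod.natCast_rightInverse z, this, halfm]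

lemma Tm_castHom {m : ℕ} (hm : 2 ∣ m) [NeZero m] (γ : ZMod 2) :
    (ZMod.castHom hm (ZMod 2)) (Tm m γ) = γ := by
  have hcases : ∀ δ : ZMod 2, δ = 0 ∨ δ = 1 := by decide
  rcases hcases γ with rfl | rfl
  · simp [Tm]
  · have h1 : Tm m 1 = 1 := by
      simp [Tm, ZMod.val_one]
    rw [h1, map_one]

lemma Tlemma {m : ℕ} (hm : 2 ∣ m) [NeZero m] (α β : ZMod 2) (x u : ZMod m)
    (h : x + x + Tm m α = u + u + Tm m β) : α = β ∧ (x = u ∨ x = u + halfm m) := by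
  have hαβ : α = β := by
    have hc := congrArg (ZMod.castHom hm (ZMod 2)) h
    simp only [map_add, Tm_castHom hm] at hc
    have hself : ∀ a : ZMod 2, a + a = 0 := by decide
    rwa [hself, hself, zero_add, zero_add] at hc
  subst hαβ
  refine ⟨rfl, ?_⟩
  have hxx : x + x = u + u := by
    exact add_right_cancel h
  have hz : (x - u) + (x - u) = 0 := by
    rw [sub_add_sub_comm, hxx, sub_self]
  by_cases h0 : x - u = 0
  · left; exact sub_eq_zero.mp h0
  · right
    obtain ⟨-, hh⟩ := zmod_invol_even hz h0
    rw [← hh]; abel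

lemma carry_flip {m : ℕ} (hm : 2 ∣ m) [NeZero m] (x : ZMod m) :
    cm m (x + halfm m) = cm m x + 1 := by
  obtain ⟨k, rfl⟩ := hm
  have hk : k ≠ 0 := by have := NeZero.ne (2 * k); omega
  have hhalf : (2 * k) / 2 = k := by omega
  have hvh : (halfm (2 * k)).val = k := by
    rw [halfm, hhalf, ZMod.val_cast_of_lt (by omega)]
  have hval : (x + halfm (2 * k)).val = (x.val + k) % (2 * k) := by
    rw [ZMod.val_add, hvh]
  have hxlt := ZMod.val_lt x
  unfold cm
  rw [hval, hhalf]
  by_cases hx : x.val < k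
  · rw [Nat.mod_eq_of_lt (by omega), if_neg (by omega), if_pos hx]; decide
  · rw [Nat.mod_eq_sub_mod (by omega), Nat.mod_eq_of_lt (by omega), if_pos (by omega), if_neg hx]
    decide

/-! The carry gadget -/

structure Gadget (B : Type*) [AddCommGroup B] where
  wf : B
  h : B → ZMod 2
  F : ZMod 2 → B → B
  hF : ∀ ε, Function.Bijective (F ε)
  hG2 : ∀ ε ε' b v, b + F ε b = v + F ε' v → ε = ε' ∧ (b = v ∨ b = v + wf)
  hG3 : ∀ b, h (b + wf) = h b + 1

def zmodGadget (m : ℕ) (hm : 2 ∣ m) [NeZero m] : Gadget (ZMod m) where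
  wf := halfm m
  h := cm m
  F := fun ε b => b + Tm m ε
  hF := fun ε => (Equiv.addRight (Tm m ε)).bijective
  hG2 := fun ε ε' b v hb => by
    apply Tlemma hm ε ε' b v
    rw [add_assoc, add_assoc]; exact hb
  hG3 := carry_flip hm

def Gadget.ofAddEquiv {A B : Type*} [AddCommGroup A] [AddCommGroup B] (e : A ≃+ B)
    (g : Gadget B) : Gadget A where
  wf := e.symm g.wf
  h := fun a => g.h (e a)
  F := fun ε a => e.symm (g.F ε (e a))
  hF := fun ε => e.symm.bijective.comp ((g.hF ε).comp e.bijective)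
  hG2 := fun ε ε' b v hb => by
    have hb' : e b + g.F ε (e b) = e v + g.F ε' (e v) := by
      have := congrArg e hb
      simpa [map_add] using this
    obtain ⟨h1, h2⟩ := g.hG2 _ _ _ _ hb'
    refine ⟨h1, ?_⟩
    rcases h2 with h2 | h2
    · exact Or.inl (e.injective h2)
    · right
      apply e.injective
      rw [map_add, h2]
      simp
  hG3 := fun b => by
    have he : e (b + e.symm g.wf) = e b + g.wf := by simp [map_add]
    show g.h (e (b + e.symm g.wf)) = g.h (e b) + 1
    rw [he, g.hG3]

lemma zmod2_ne_add_one (a : ZMod 2) : a ≠ a + 1 := by revert a; decide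

def gadgetProd {B : Type*} [AddCommGroup B] (m : ℕ) (hm : 2 ∣ m) [NeZero m] (g : Gadget B) :
    Gadget (ZMod m × B) where
  wf := (0, g.wf)
  h := fun p => cm m p.1 + g.h p.2
  F := fun ε p => (p.1 + Tm m ε, g.F (cm m (p.1 + Tm m ε)) p.2)
  hF := fun ε => by
    constructor
    · rintro ⟨x, b⟩ ⟨u, v⟩ he
      rw [Prod.ext_iff] at he
      obtain ⟨h1, h2⟩ := he
      dsimp at h1 h2
      have hxu : x = u := by exact add_right_cancel h1
      subst hxu
      have hbv : b = v := (g.hF _).1 h2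
      rw [hbv]
    · rintro ⟨x', b'⟩
      obtain ⟨b, hb⟩ := (g.hF (cm m x')).2 b'
      exact ⟨(x' - Tm m ε, b), by simp [hb]⟩
  hG2 := by
    rintro ε ε' ⟨x, b⟩ ⟨u, v⟩ he
    rw [Prod.ext_iff] at he
    obtain ⟨h1, h2⟩ := he
    dsimp at h1 h2
    have hT : ε = ε' ∧ (x = u ∨ x = u + halfm m) := by
      apply Tlemma hm ε ε' x u
      rw [add_assoc, add_assoc]; exact h1
    obtain ⟨rfl, hxu⟩ := hT
    obtain ⟨hcc, hbv⟩ := g.hG2 _ _ _ _ h2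
    rcases hxu with rfl | rfl
    · refine ⟨rfl, ?_⟩
      rcases hbv with rfl | rfl
      · exact Or.inl rfl
      · right; rw [Prod.mk_add_mk, add_zero]
    · exfalso
      have : cm m (u + halfm m + Tm m ε) = cm m (u + Tm m ε) + 1 := by
        rw [add_right_comm, carry_flip hm]
      rw [this] at hcc
      exact zmod2_ne_add_one _ hcc.symm
  hG3 := by
    rintro ⟨x, b⟩
    show cm m (x + 0) + g.h (b + g.wf) = cm m x + g.h b + 1
    rw [add_zero, g.hG3, add_assoc]

lemma hasCM_zmod_prod {B : Type*} [AddCommGroup B] [Finite B] (m : ℕ) (hm : 2 ∣ m) [NeZero m]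
    (g : Gadget B) : HasCM (ZMod m × B) := by
  set φ : ZMod m × B → ZMod m × B := fun p =>
    (p.1 + Tm m (g.h p.2), g.F (cm m (p.1 + Tm m (g.h p.2))) p.2) with hφdef
  have hφ : Function.Bijective φ := by
    rw [← Finite.injective_iff_bijective]
    rintro ⟨x, b⟩ ⟨u, v⟩ he
    rw [hφdef, Prod.ext_iff] at he
    obtain ⟨h1, h2⟩ := he
    dsimp at h1 h2
    by_cases hbv : b = v
    · subst hbv
      have hxu : x = u := by exact add_right_cancel h1
      rw [hxu]
    · exfalso
      rw [h1] at h2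
      exact hbv ((g.hF _).1 h2)
  refine ⟨φ, hφ, ?_⟩
  rw [← Finite.injective_iff_bijective]
  rintro ⟨x, b⟩ ⟨u, v⟩ he
  rw [hφdef, Prod.ext_iff] at he
  obtain ⟨h1, h2⟩ := he
  dsimp at h1 h2
  have hT : g.h b = g.h v ∧ (x = u ∨ x = u + halfm m) := by
    apply Tlemma hm _ _ x u
    rw [add_assoc, add_assoc]; exact h1
  obtain ⟨hhbv, hxu⟩ := hT
  obtain ⟨hcc, hbv⟩ := g.hG2 _ _ _ _ h2
  have hbveq : b = v := by
    rcases hbv with rfl | rfl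
    · rfl
    · exfalso
      rw [g.hG3] at hhbv
      exact zmod2_ne_add_one _ hhbv.symm
  subst hbveq
  rcases hxu with rfl | rfl
  · rfl
  · exfalso
    rw [hhbv, add_right_comm, carry_flip hm] at hcc
    exact zmod2_ne_add_one _ hcc.symm

lemma gadget_pi : ∀ (n : ℕ) (ι : Type) (_ : Fintype ι) (q : ι → ℕ),
    Fintype.card ι = n + 1 → (∀ i, 2 ∣ q i) → (∀ i, q i ≠ 0) →
    Nonempty (Gadget (∀ i, ZMod (q i))) := by
  intro n
  induction n with
  | zero =>
    intro ι _ q hcard hq hq0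
    obtain ⟨i0, hi0⟩ := Fintype.card_eq_one_iff.mp hcard
    haveI : Unique ι := ⟨⟨i0⟩, fun y => hi0 y⟩
    haveI : NeZero (q default) := ⟨hq0 default⟩
    have e : (∀ i, ZMod (q i)) ≃+ ZMod (q default) :=
      AddEquiv.mk' (Equiv.piUnique (fun i => ZMod (q i))) (fun f f' => rfl)
    exact ⟨Gadget.ofAddEquiv e (zmodGadget (q default) (hq default))⟩
  | succ n ih =>
    intro ι _ q hcard hq hq0
    classical
    have hpos : 0 < Fintype.card ι := by omega
    obtain ⟨i0⟩ := Fintype.card_pos_iff.mp hpos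
    have hcard' : Fintype.card {j // j ≠ i0} = n + 1 := by
      have h1 : Fintype.card {j // ¬ j = i0} = Fintype.card ι - Fintype.card {j // j = i0} :=
        Fintype.card_subtype_compl _
      have h2 : Fintype.card {j // j = i0} = 1 := Fintype.card_subtype_eq i0
      have : Fintype.card {j // j ≠ i0} = Fintype.card {j // ¬ j = i0} := rfl
      omega
    obtain ⟨g⟩ := ih {j // j ≠ i0} inferInstance (fun j => q j) hcard'
      (fun j => hq j) (fun j => hq0 j)
    haveI : NeZero (q i0) := ⟨hq0 i0⟩
    have e : (∀ i, ZMod (q i)) ≃+ ZMod (q i0) × (∀ j : {j // j ≠ i0}, ZMod (q j)) :=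
      AddEquiv.mk' (Equiv.piSplitAt i0 (fun i => ZMod (q i))) (fun f f' => rfl)
    exact ⟨Gadget.ofAddEquiv e (gadgetProd (q i0) (hq i0) g)⟩

lemma hasCM_pi_even (ι : Type) [Fintype ι] (q : ι → ℕ) (hcard : 2 ≤ Fintype.card ι)
    (hq : ∀ i, 2 ∣ q i) (hq0 : ∀ i, q i ≠ 0) : HasCM (∀ i, ZMod (q i)) := by
  classical
  obtain ⟨i0⟩ := Fintype.card_pos_iff.mp (by omega : 0 < Fintype.card ι)
  have hcard' : Fintype.card {j // j ≠ i0} = (Fintype.card ι - 2) + 1 := by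
    have h1 : Fintype.card {j // ¬ j = i0} = Fintype.card ι - Fintype.card {j // j = i0} :=
      Fintype.card_subtype_compl _
    have h2 : Fintype.card {j // j = i0} = 1 := Fintype.card_subtype_eq i0
    have h3 : Fintype.card {j // j ≠ i0} = Fintype.card {j // ¬ j = i0} := rfl
    omega
  obtain ⟨g⟩ := gadget_pi _ {j // j ≠ i0} inferInstance (fun j => q j) hcard'
    (fun j => hq j) (fun j => hq0 j)
  haveI : NeZero (q i0) := ⟨hq0 i0⟩
  haveI : ∀ i, NeZero (q i) := fun i => ⟨hq0 i⟩
  have e : (∀ i, ZMod (q i)) ≃+ ZMod (q i0) × (∀ j : {j // j ≠ i0}, ZMod (q j)) :=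
    AddEquiv.mk' (Equiv.piSplitAt i0 (fun i => ZMod (q i))) (fun f f' => rfl)
  exact hasCM_of_addEquiv e (hasCM_zmod_prod (q i0) (hq i0) g)

lemma hasCM_of_inClassG {Γ : Type*} [AddCommGroup Γ] [Fintype Γ] (h : InClassG Γ) : HasCM Γ := by
  rcases h with hodd | hinv
  · exact hasCM_of_odd hodd
  · obtain ⟨ι, hι, n, h1lt, ⟨e⟩⟩ := AddCommGroup.equiv_directSum_zmod_of_finite' Γ
    haveI := hι
    haveI : ∀ i, NeZero (n i) := fun i => ⟨by have := h1lt i; omega⟩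
    classical
    have edf : (DirectSum ι fun i => ZMod (n i)) ≃+ (∀ i, ZMod (n i)) :=
      AddEquiv.mk' DFinsupp.equivFunOnFintype (fun f f' => rfl)
    have e2 : Γ ≃+ (∀ i, ZMod (n i)) := e.trans edf
    have hcoord : ∀ w : Γ, w + w = 0 → ∀ i, (e2 w) i + (e2 w) i = 0 := by
      intro w hw i
      have hz : e2 w + e2 w = 0 := by rw [← map_add, hw, map_zero]
      have := congrFun hz i
      simpa using this
    have hodd0 : ∀ w : Γ, w + w = 0 → ∀ i, ¬ 2 ∣ n i → (e2 w) i = 0 := by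
      intro w hw i hi
      exact zmod_invol_odd hi (hcoord w hw i)
    have hsub2 : 2 ≤ Fintype.card {i // 2 ∣ n i} := by
      by_contra hlt
      push_neg at hlt
      haveI hss : Subsingleton {i // 2 ∣ n i} :=
        Fintype.card_le_one_iff_subsingleton.mp (by omega)
      have heven : ∀ w : Γ, w ≠ 0 → w + w = 0 → ∀ i, 2 ∣ n i → (e2 w) i = halfm (n i) := by
        intro w hw0 hw i hi
        have hx0 : e2 w ≠ 0 := fun hh => hw0 (by
          have := congrArg e2.symm hh
          simpa using this)
        obtain ⟨j, hj⟩ : ∃ j, (e2 w) j ≠ 0 := by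
          by_contra hall
          push_neg at hall
          exact hx0 (funext hall)
        have hj2 : 2 ∣ n j := by
          by_contra hjo
          exact hj (hodd0 w hw j hjo)
        have hij : i = j :=
          congrArg Subtype.val (Subsingleton.elim (⟨i, hi⟩ : {i // 2 ∣ n i}) ⟨j, hj2⟩)
        subst hij
        exact (zmod_invol_even (hcoord w hw i) hj).2
      haveI : Fintype {g : Γ // g ≠ 0 ∧ g + g = 0} := Fintype.ofFinite _
      rw [Nat.card_eq_fintype_card] at hinv
      obtain ⟨⟨a, ha⟩, ⟨b, hb⟩, hab⟩ := Fintype.one_lt_card_iff_nontrivial.mp hinv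
      apply hab
      apply Subtype.ext
      apply e2.injective
      funext i
      by_cases hi : 2 ∣ n i
      · rw [heven a ha.1 ha.2 i hi, heven b hb.1 hb.2 i hi]
      · rw [hodd0 a ha.2 i hi, hodd0 b hb.2 i hi]
    have esplit : (∀ i, ZMod (n i)) ≃+
        ((∀ i : {x // 2 ∣ n x}, ZMod (n i.1)) × (∀ i : {x // ¬ 2 ∣ n x}, ZMod (n i.1))) :=
      AddEquiv.mk' (Equiv.piEquivPiSubtypeProd (fun i => 2 ∣ n i) (fun i => ZMod (n i)))
        (fun f f' => rfl)
    apply hasCM_of_addEquiv (e2.trans esplit)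
    apply HasCM.prod
    · exact hasCM_pi_even _ _ hsub2 (fun i => i.2) (fun i => by have := h1lt i.1; omega)
    · apply hasCM_of_odd
      rw [Fintype.card_pi]
      have hc : ∀ i : {x // ¬ 2 ∣ n x}, Fintype.card (ZMod (n i.1)) = n i.1 :=
        fun i => ZMod.card (n i.1)
      rw [Finset.prod_congr rfl (fun i _ => hc i)]
      exact Finset.prod_induction _ Odd (fun a b => Odd.mul) odd_one
        (fun i _ => Nat.odd_iff.mpr (by have := i.2; omega))

theorem stmt14 {Γ : Type*} [AddCommGroup Γ] [Fintype Γ] :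
    (∃ φ : Γ → Γ, Function.Bijective φ ∧ Function.Bijective (fun x : Γ => x + φ x)) ↔
      InClassG Γ := by
  constructor
  · rintro ⟨φ, hφ, hσ⟩
    by_contra hnot
    rw [InClassG] at hnot
    push_neg at hnot
    obtain ⟨hnodd, hle⟩ := hnot
    have heven : 2 ∣ Fintype.card Γ := (Nat.not_odd_iff_even.mp hnodd).two_dvd
    haveI : Fact (Nat.Prime 2) := ⟨Nat.prime_two⟩
    obtain ⟨u, hu⟩ := exists_prime_addOrderOf_dvd_card 2 heven
    have hu0 : u ≠ 0 := by
      intro h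
      rw [h, addOrderOf_zero] at hu
      omega
    have huu : u + u = 0 := by
      have := addOrderOf_nsmul_eq_zero u
      rwa [hu, two_nsmul] at this
    classical
    set S := ∑ g : Γ, g with hS
    have h1 : ∑ x : Γ, (x + φ x) = S := Function.Bijective.sum_comp hσ id
    have h2 : ∑ x : Γ, φ x = S := Function.Bijective.sum_comp hφ id
    have h3 : ∑ x : Γ, (x + φ x) = S + S := by rw [Finset.sum_add_distrib, h2]
    have hS0 : S = 0 := by
      have h4 : S + S = S := by rw [← h3, h1]
      exact add_eq_right.mp h4
    have hSu : S = u := by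
      rw [hS, ← Finset.sum_erase_add Finset.univ (fun g : Γ => g) (Finset.mem_univ u)]
      have hz : ∑ x ∈ Finset.univ.erase u, x = 0 := by
        have hmem : ∀ (a : Γ), a ∈ Finset.univ.erase u → -a ∈ Finset.univ.erase u := by
          intro a ha
          refine Finset.mem_erase.mpr ⟨?_, Finset.mem_univ _⟩
          intro hau
          have ha' : a ≠ u := Finset.ne_of_mem_erase ha
          apply ha'
          have hthis : a = -u := by rw [← hau, neg_neg]
          rw [hthis, neg_eq_of_add_eq_zero_left huu]
        refine Finset.sum_involution (fun a _ => -a) (fun a _ => by simp) ?_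
          hmem (fun a ha => by simp)
        intro a ha hane hneg
        have haa : a + a = 0 := by
          have hna : -a = a := hneg
          nth_rewrite 2 [← hna]
          simp
        have ha' : a ≠ u := Finset.ne_of_mem_erase ha
        haveI : Fintype {g : Γ // g ≠ 0 ∧ g + g = 0} :=
          Fintype.ofFinite {g : Γ // g ≠ 0 ∧ g + g = 0}
        have hne2 : (⟨a, hane, haa⟩ : {g : Γ // g ≠ 0 ∧ g + g = 0}) ≠ ⟨u, hu0, huu⟩ :=
          fun hh => ha' (congrArg Subtype.val hh)
        have h2le : 2 ≤ Nat.card {g : Γ // g ≠ 0 ∧ g + g = 0} := by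
          rw [Nat.card_eq_fintype_card]
          exact Fintype.one_lt_card_iff_nontrivial.mpr ⟨_, _, hne2⟩
        omega
      rw [hz, zero_add]
    exact hu0 (by rw [← hSu, hS0])
  · exact hasCM_of_inClassG
end

section
/- Let k and c be positive integers and let Γ be a finite Abelian group of order (4k+2)·c. Then there does not exist a Γ-magic rectangle set MRS_Γ(2k+1, 2; c). -/
/-- A `Γ`-magic rectangle set `MRS_Γ(a, b; c)`. -/
def IsMagicRectangleSet (Γ : Type*) [AddCommGroup Γ] [Fintype Γ] (a b c : ℕ) : Prop :=
  ∃ (x : Fin c × Fin a × Fin b → Γ) (ω δ : Γ),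
    Function.Bijective x ∧
    (∀ (s : Fin c) (i : Fin a), ∑ j : Fin b, x (s, i, j) = ω) ∧
    (∀ (s : Fin c) (j : Fin b), ∑ i : Fin a, x (s, i, j) = δ)

theorem stmt18 {Γ : Type*} [AddCommGroup Γ] [Fintype Γ] (k c : ℕ)
    (hk : 0 < k) (hc : 0 < c) (hcard : Fintype.card Γ = (4 * k + 2) * c) :
    ¬ IsMagicRectangleSet Γ (2 * k + 1) 2 c := by
  rintro ⟨x, ω, δ, ⟨hinj, hsurj⟩, hrow, hcol⟩
  set s0 : Fin c := ⟨0, hc⟩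
  have h1 : ∑ i : Fin (2 * k + 1), ∑ j : Fin 2, x (s0, i, j) = (2 * k + 1) • ω := by
    simp [hrow]
  have h2 : ∑ j : Fin 2, ∑ i : Fin (2 * k + 1), x (s0, i, j) = 2 • δ := by
    simp [hcol]
  rw [Finset.sum_comm] at h1
  have hblock : (2 * k + 1) • ω = 2 • δ := by rw [← h1, h2]
  set y : Γ := δ - k • ω with hy
  have hyy : y + y = ω := by
    have : (2 * k + 1) • ω = 2 • (k • ω) + ω := by
      rw [add_smul, mul_smul, one_smul]
    rw [this, two_smul] at hblock
    have := hblock.symm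
    rw [hy]
    abel_nf
    abel_nf at this
    linear_combination (norm := abel) this
  obtain ⟨⟨s, i, j⟩, hx⟩ := hsurj y
  have hpair : x (s, i, 0) + x (s, i, 1) = ω := by
    simpa [Fin.sum_univ_two] using hrow s i
  have hne : ((s, i, (0 : Fin 2)) : Fin c × Fin (2 * k + 1) × Fin 2) ≠ (s, i, 1) := by
    simp
  fin_cases j <;> simp only [Fin.isValue, Fin.zero_eta, Fin.mk_one] at hx
  · have h01 : x (s, i, 1) = x (s, i, 0) := by
      have : x (s, i, 1) = ω - y := by rw [← hpair, hx]; abel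
      rw [this, hx, ← hyy]; abel
    exact hne (hinj h01.symm)
  · have h01 : x (s, i, 0) = x (s, i, 1) := by
      have : x (s, i, 0) = ω - y := by rw [← hpair, hx]; abel
      rw [this, hx, ← hyy]; abel
    exact hne (hinj h01)
end
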